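/- Let α > 0, c₀ = √(tanh(α)/α) > 0, and for integer p with |p| ≥ 2 let k(p) be the unique solution of ω_α(k) + ω_α(k+p) = −αc₀p, where ω_α(k) = sign(k)·√(αk·tanh(αk)). Then k(p)·(k(p)+p) > 0 and ω_α(k(p))·ω_α(k(p)+p) > 0. -/

import Mathlib

/-!
For `p ≥ 2` the right-hand side `-α c₀ p` is negative, so `k(p)` and `k(p) + p` cannot both be
nonnegative. Nor can `k(p) < 0 ≤ k(p) + p`: then `|k(p)| ≤ p`, and strict subadditivity of `tanh`
on `(0, ∞)` gives `tanh (α p) < p tanh α`, hence `|ω_α(k(p))| < α c₀ p` while `ω_α(k(p) + p) ≥ 0`,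
so the left-hand side would exceed `-α c₀ p`. The case `p ≤ -2` follows because `ω_α` is odd,
and `ω_α` has the sign of its argument.
-/

noncomputable def omegaA (α k : ℝ) : ℝ :=
  Real.sign k * Real.sqrt (α * k * Real.tanh (α * k))

open Real

namespace Real

theorem tanh_pos {x : ℝ} (hx : 0 < x) : 0 < tanh x := by
  rw [tanh_eq_sinh_div_cosh]
  exact div_pos (sinh_pos_iff.2 hx) (cosh_pos x)

theorem tanh_nonneg {x : ℝ} (hx : 0 ≤ x) : 0 ≤ tanh x := by
  rcases hx.eq_or_lt with rfl | hx
  · rw [tanh_zero]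
  · exact (tanh_pos hx).le

theorem tanh_le_tanh {x y : ℝ} (h : x ≤ y) : tanh x ≤ tanh y := by
  rw [tanh_eq_sinh_div_cosh, tanh_eq_sinh_div_cosh,
    div_le_div_iff₀ (cosh_pos x) (cosh_pos y)]
  have hsub : sinh (x - y) ≤ 0 := sinh_nonpos_iff.2 (by linarith)
  rw [sinh_sub] at hsub
  linarith

theorem tanh_add_lt_add {x y : ℝ} (hx : 0 < x) (hy : 0 < y) :
    tanh (x + y) < tanh x + tanh y := by
  have hcx := cosh_pos x
  have hcy := cosh_pos y
  have hsx := sinh_pos_iff.2 hx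
  have hsy := sinh_pos_iff.2 hy
  calc tanh (x + y)
      = (sinh x * cosh y + cosh x * sinh y) / (cosh x * cosh y + sinh x * sinh y) := by
        rw [tanh_eq_sinh_div_cosh, sinh_add, cosh_add]
    _ < (sinh x * cosh y + cosh x * sinh y) / (cosh x * cosh y) := by
        gcongr
        linarith [mul_pos hsx hsy]
    _ = tanh x + tanh y := by
        rw [tanh_eq_sinh_div_cosh, tanh_eq_sinh_div_cosh]
        field_simp

theorem tanh_nat_mul_lt {x : ℝ} (hx : 0 < x) {n : ℕ} (hn : 2 ≤ n) :
    tanh (n * x) < n * tanh x := by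
  induction n, hn using Nat.le_induction with
  | base =>
    have h := tanh_add_lt_add hx hx
    rw [← two_mul, ← two_mul] at h
    exact_mod_cast h
  | succ n hn ih =>
    have h := tanh_add_lt_add (by positivity : 0 < (n : ℝ) * x) hx
    push_cast
    rw [add_mul, one_mul, add_mul, one_mul]
    linarith

end Real

theorem omegaA_of_nonneg (α : ℝ) {k : ℝ} (hk : 0 ≤ k) :
    omegaA α k = √(α * k * tanh (α * k)) := by
  rcases hk.eq_or_lt with rfl | hk
  · simp [omegaA]
  · rw [omegaA, sign_of_pos hk, one_mul]

theorem omegaA_neg (α k : ℝ) : omegaA α (-k) = -omegaA α k := by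
  have heven : α * -k * tanh (α * -k) = α * k * tanh (α * k) := by
    rw [mul_neg, tanh_neg]
    ring
  rw [omegaA, omegaA, Real.sign_neg, heven, neg_mul]

theorem omegaA_nonneg (α : ℝ) {k : ℝ} (hk : 0 ≤ k) : 0 ≤ omegaA α k := by
  rw [omegaA_of_nonneg α hk]
  exact sqrt_nonneg _

theorem omegaA_pos_iff {α : ℝ} (hα : 0 < α) {k : ℝ} : 0 < omegaA α k ↔ 0 < k := by
  constructor
  · intro hω
    by_contra! hk
    have := omegaA_nonneg α (neg_nonneg.2 hk)
    rw [omegaA_neg] at this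
    linarith
  · intro hk
    rw [omegaA_of_nonneg α hk.le, sqrt_pos]
    have := tanh_pos (mul_pos hα hk)
    positivity

theorem omegaA_neg_iff {α : ℝ} (hα : 0 < α) {k : ℝ} : omegaA α k < 0 ↔ k < 0 := by
  rw [← neg_pos, ← omegaA_neg, omegaA_pos_iff hα, neg_pos]

theorem omegaA_mul_pos_iff {α : ℝ} (hα : 0 < α) {k l : ℝ} :
    0 < omegaA α k * omegaA α l ↔ 0 < k * l := by
  simp only [mul_pos_iff, omegaA_pos_iff hα, omegaA_neg_iff hα]

/-- The constant `α * √(tanh α / α)` is `ω_α 1`. -/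
theorem omegaA_lt_of_le {α : ℝ} (hα : 0 < α) {k b : ℝ} (hk : 0 ≤ k) (hkb : k ≤ b)
    (hb : tanh (b * α) < b * tanh α) : omegaA α k < α * √(tanh α / α) * b := by
  have hb0 : 0 < b := (hk.trans hkb).lt_of_ne (by rintro rfl; simp at hb)
  have htα := tanh_pos hα
  have hmono : k * tanh (α * k) ≤ b * tanh (b * α) :=
    mul_le_mul hkb (tanh_le_tanh (by nlinarith)) (tanh_nonneg (by positivity)) hb0.le
  rw [omegaA_of_nonneg α hk, sqrt_lt' (by positivity), mul_pow, mul_pow,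
    sq_sqrt (div_pos htα hα).le]
  calc α * k * tanh (α * k) = α * (k * tanh (α * k)) := by ring
    _ < α * (b * (b * tanh α)) :=
        mul_lt_mul_of_pos_left (hmono.trans_lt (mul_lt_mul_of_pos_left hb hb0)) hα
    _ = α ^ 2 * (tanh α / α) * b ^ 2 := by field_simp

theorem add_neg_of_omegaA_add_eq {α : ℝ} (hα : 0 < α) {k p : ℝ} (hp0 : 0 < p)
    (hp : tanh (p * α) < p * tanh α)
    (h : omegaA α k + omegaA α (k + p) = -(α * √(tanh α / α) * p)) : k + p < 0 := by
  by_contra! hkp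
  have hrhs : 0 < α * √(tanh α / α) * p :=
    mul_pos (mul_pos hα (sqrt_pos.2 (div_pos (tanh_pos hα) hα))) hp0
  have hωk : -(α * √(tanh α / α) * p) < omegaA α k := by
    rcases le_or_gt 0 k with hk | hk
    · linarith [omegaA_nonneg α hk]
    · have := omegaA_lt_of_le hα (neg_nonneg.2 hk.le) (by linarith) hp
      rw [omegaA_neg] at this
      linarith
  linarith [omegaA_nonneg α hkp]

theorem mul_add_pos_of_omegaA_add_eq {α : ℝ} (hα : 0 < α) {k p : ℝ}
    (hp : tanh (|p| * α) < |p| * tanh α)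
    (h : omegaA α k + omegaA α (k + p) = -(α * √(tanh α / α) * p)) : 0 < k * (k + p) := by
  have habs0 : 0 < |p| := abs_pos.2 (by rintro rfl; simp at hp)
  rcases abs_cases p with ⟨habs, -⟩ | ⟨habs, -⟩
  · rw [habs] at hp habs0
    have hkp := add_neg_of_omegaA_add_eq hα habs0 hp h
    exact mul_pos_of_neg_of_neg (by linarith) hkp
  · rw [habs] at hp habs0
    have h' : omegaA α (-k) + omegaA α (-k + -p) = -(α * √(tanh α / α) * -p) := by
      rw [← neg_add, omegaA_neg, omegaA_neg]
      linarith
    have hkp := add_neg_of_omegaA_add_eq hα habs0 hp h'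
    exact mul_pos (by linarith) (by linarith)

theorem collision_krein (α : ℝ) (hα : 0 < α) (K : ℝ → ℝ)
    (hK : ∀ p : ℝ, omegaA α (K p) + omegaA α (K p + p) =
      -(α * Real.sqrt (Real.tanh α / α) * p)) :
    ∀ p : ℤ, 2 ≤ |p| →
      0 < K (p : ℝ) * (K (p : ℝ) + (p : ℝ)) ∧
        0 < omegaA α (K (p : ℝ)) * omegaA α (K (p : ℝ) + (p : ℝ)) := by
  intro p hp
  have hsubadd : tanh (|(p : ℝ)| * α) < |(p : ℝ)| * tanh α := by
    have h := tanh_nat_mul_lt hα (n := p.natAbs) (by rw [Int.abs_eq_natAbs] at hp; omega)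
    rwa [Nat.cast_natAbs, Int.cast_abs] at h
  have hsign := mul_add_pos_of_omegaA_add_eq hα hsubadd (hK p)
  exact ⟨hsign, (omegaA_mul_pos_iff hα).2 hsign⟩
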